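/- arXiv:2506.05149 — 3 statements merged into one kernel-verified Lean document; each statement's English description precedes it below -/
import Mathlib

section
/- Fix s ∈ (−1/2, 0). For any sequence of nonnegative reals (c_n)_{n∈ℤ} and any κ ≥ 1, one has ∫_κ^∞ (Σ_{n∈ℤ} c_n/(|n|+ϰ)) ϰ^{2s} dϰ ≤ C_s Σ_{n∈ℤ} c_n (|n|+κ)^{2s}, where C_s depends only on s. In particular, ∫_κ^∞ ‖f‖²_{H^{-1/2}_ϰ} ϰ^{2s} dϰ ≤ C_s ‖f‖²_{H^s_κ}, where ‖f‖²_{H^r_κ} = Σ_n |f̂(n)|² (|n|+κ)^{2r}. -/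
open Real MeasureTheory ENNReal

lemma key_integral_bound (p : ℝ) (hp1 : -1 < p) (hp0 : p < 0) (a κ : ℝ)
    (ha : 0 ≤ a) (hκ : 1 ≤ κ) :
    (∫⁻ x in Set.Ioi κ, ENNReal.ofReal (x ^ p) / ENNReal.ofReal (a + x))
      ≤ ENNReal.ofReal (1 / (p + 1) + 1 / (-p)) * ENNReal.ofReal ((a + κ) ^ p) := by
  have hκ0 : (0:ℝ) < κ := lt_of_lt_of_le one_pos hκ
  set b : ℝ := a + κ with hbdef
  have hκb : κ ≤ b := le_add_of_nonneg_left ha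
  have hb0 : (0:ℝ) < b := lt_of_lt_of_le hκ0 hκb
  have hp1' : (0:ℝ) < p + 1 := by linarith
  have hsplit : Set.Ioi κ = Set.Ioc κ b ∪ Set.Ioi b := (Set.Ioc_union_Ioi_eq_Ioi hκb).symm
  rw [hsplit, lintegral_union measurableSet_Ioi Set.Ioc_disjoint_Ioi_same]
  have h1 : (∫⁻ x in Set.Ioc κ b, ENNReal.ofReal (x ^ p) / ENNReal.ofReal (a + x))
      ≤ ENNReal.ofReal (b ^ p / (p + 1)) := by
    have step : (∫⁻ x in Set.Ioc κ b, ENNReal.ofReal (x ^ p) / ENNReal.ofReal (a + x))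
        ≤ ∫⁻ x in Set.Ioc κ b, ENNReal.ofReal (x ^ p / b) := by
      apply setLIntegral_mono' measurableSet_Ioc
      intro x hx
      rw [ENNReal.ofReal_div_of_pos hb0]
      exact ENNReal.div_le_div le_rfl (ENNReal.ofReal_le_ofReal (by
        have := hx.1; simp only [hbdef]; linarith))
    refine step.trans ?_
    have hint : IntegrableOn (fun x : ℝ => x ^ p / b) (Set.Ioc κ b) := by
      exact ((intervalIntegral.intervalIntegrable_rpow' hp1 (a := κ) (b := b)).1).div_const b
    rw [← ofReal_integral_eq_lintegral_ofReal hint ?_]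
    · apply ENNReal.ofReal_le_ofReal
      have : ∫ x in Set.Ioc κ b, x ^ p / b = (∫ x in κ..b, x ^ p) / b := by
        rw [intervalIntegral.integral_of_le hκb, ← integral_div]
      rw [this, integral_rpow (Or.inl hp1)]
      rw [div_div]
      rw [div_le_div_iff₀ (by positivity) (by positivity)]
      have hbp : b ^ (p + 1) = b ^ p * b := by
        rw [rpow_add_one hb0.ne']
      have hκp1 : 0 ≤ κ ^ (p + 1) := rpow_nonneg hκ0.le _
      nlinarith [rpow_nonneg hb0.le p]
    · filter_upwards [ae_restrict_mem measurableSet_Ioc] with x hx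
      have : (0:ℝ) < x := lt_of_lt_of_le hκ0 hx.1.le
      positivity
  have h2 : (∫⁻ x in Set.Ioi b, ENNReal.ofReal (x ^ p) / ENNReal.ofReal (a + x))
      ≤ ENNReal.ofReal (b ^ p / (-p)) := by
    have step : (∫⁻ x in Set.Ioi b, ENNReal.ofReal (x ^ p) / ENNReal.ofReal (a + x))
        ≤ ∫⁻ x in Set.Ioi b, ENNReal.ofReal (x ^ (p - 1)) := by
      apply setLIntegral_mono' measurableSet_Ioi
      intro x hx
      have hx0 : (0:ℝ) < x := lt_of_le_of_lt hb0.le hx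
      have : x ^ (p - 1) = x ^ p / x := by
        rw [Real.rpow_sub hx0, Real.rpow_one]
      rw [this, ENNReal.ofReal_div_of_pos hx0]
      exact ENNReal.div_le_div le_rfl (ENNReal.ofReal_le_ofReal (by linarith))
    refine step.trans ?_
    have hint : IntegrableOn (fun x : ℝ => x ^ (p - 1)) (Set.Ioi b) :=
      integrableOn_Ioi_rpow_of_lt (by linarith) hb0
    rw [← ofReal_integral_eq_lintegral_ofReal hint ?_]
    · apply ENNReal.ofReal_le_ofReal
      rw [integral_Ioi_rpow_of_lt (by linarith) hb0]
      rw [sub_add_cancel, neg_div, div_neg]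
    · filter_upwards [ae_restrict_mem measurableSet_Ioi] with x hx
      have : (0:ℝ) < x := lt_of_le_of_lt hb0.le hx
      positivity
  calc _ ≤ ENNReal.ofReal (b ^ p / (p + 1)) + ENNReal.ofReal (b ^ p / (-p)) :=
        add_le_add h1 h2
    _ = ENNReal.ofReal (1 / (p + 1) + 1 / (-p)) * ENNReal.ofReal (b ^ p) := by
        have hnp : (0:ℝ) < -p := by linarith
        rw [← ENNReal.ofReal_add (div_nonneg (Real.rpow_nonneg hb0.le p) hp1'.le)
            (div_nonneg (Real.rpow_nonneg hb0.le p) hnp.le),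
          ← ENNReal.ofReal_mul (by positivity)]
        congr 1
        field_simp

/-- For `s ∈ (-1/2, 0)`, for any nonnegative coefficients `c` and `κ ≥ 1`,
`∫_κ^∞ (Σ_n c_n/(|n|+ϰ)) ϰ^{2s} dϰ ≤ C_s Σ_n c_n (|n|+κ)^{2s}`. -/
theorem integral_sum_weight_bound (s : ℝ) (hs : s ∈ Set.Ioo (-(1/2) : ℝ) 0) :
    ∃ C : ℝ≥0∞, 0 < C ∧ C ≠ ∞ ∧ ∀ (c : ℤ → ℝ≥0∞) (κ : ℝ), 1 ≤ κ →
      (∫⁻ x in Set.Ioi κ, (∑' n : ℤ, c n / ENNReal.ofReal (|(n : ℝ)| + x))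
          * ENNReal.ofReal (x ^ (2 * s)))
        ≤ C * ∑' n : ℤ, c n * ENNReal.ofReal ((|(n : ℝ)| + κ) ^ (2 * s)) := by
  obtain ⟨hs1, hs2⟩ := hs
  set p : ℝ := 2 * s with hp
  have hp1 : -1 < p := by simp only [hp]; linarith
  have hp0 : p < 0 := by simp only [hp]; linarith
  refine ⟨ENNReal.ofReal (1 / (p + 1) + 1 / (-p)), ?_, ENNReal.ofReal_ne_top, ?_⟩
  · apply ENNReal.ofReal_pos.2
    have h1 : (0:ℝ) < 1 / (p + 1) := by
      have : (0:ℝ) < p + 1 := by linarith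
      positivity
    have h2 : (0:ℝ) < 1 / (-p) := by
      have : (0:ℝ) < -p := by linarith
      positivity
    linarith
  intro c κ hκ
  have hmeas : ∀ n : ℤ, Measurable fun x : ℝ =>
      ENNReal.ofReal (x ^ p) / ENNReal.ofReal (|(n:ℝ)| + x) := by
    intro n
    have h1 : Measurable fun x : ℝ => x ^ p := by fun_prop
    exact (h1.ennreal_ofReal).div ((measurable_const.add measurable_id).ennreal_ofReal)
  calc (∫⁻ x in Set.Ioi κ, (∑' n : ℤ, c n / ENNReal.ofReal (|(n : ℝ)| + x))
          * ENNReal.ofReal (x ^ (2 * s)))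
      = ∫⁻ x in Set.Ioi κ, ∑' n : ℤ,
          c n * (ENNReal.ofReal (x ^ p) / ENNReal.ofReal (|(n:ℝ)| + x)) := by
        refine lintegral_congr fun x => ?_
        rw [← ENNReal.tsum_mul_right]
        congr 1 with n
        rw [div_eq_mul_inv, div_eq_mul_inv, hp]
        ring
    _ = ∑' n : ℤ, ∫⁻ x in Set.Ioi κ,
          c n * (ENNReal.ofReal (x ^ p) / ENNReal.ofReal (|(n:ℝ)| + x)) :=
        lintegral_tsum fun n => ((hmeas n).const_mul (c n)).aemeasurable
    _ = ∑' n : ℤ, c n * ∫⁻ x in Set.Ioi κ,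
          ENNReal.ofReal (x ^ p) / ENNReal.ofReal (|(n:ℝ)| + x) := by
        exact tsum_congr fun n => lintegral_const_mul (c n) (hmeas n)
    _ ≤ ∑' n : ℤ, c n * (ENNReal.ofReal (1 / (p + 1) + 1 / (-p))
          * ENNReal.ofReal ((|(n:ℝ)| + κ) ^ p)) :=
        ENNReal.tsum_le_tsum fun n => mul_le_mul_right
          (key_integral_bound p hp1 hp0 |(n:ℝ)| κ (abs_nonneg _) hκ) _
    _ = ENNReal.ofReal (1 / (p + 1) + 1 / (-p))
          * ∑' n : ℤ, c n * ENNReal.ofReal ((|(n:ℝ)| + κ) ^ (2 * s)) := by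
        rw [← ENNReal.tsum_mul_left]
        refine tsum_congr fun n => ?_
        rw [hp]
        ring
end

section
/- Fix r ∈ ℝ and let 𝓕 be a bounded subset of H^r(𝕋). Then 𝓕 is equicontinuous in H^r(𝕋), i.e. sup_{f∈𝓕} sup_{|y|<δ} ‖f(·+y) − f‖_{H^r} → 0 as δ → 0, if and only if 𝓕 is tight in the Fourier variable, i.e. sup_{f∈𝓕} Σ_{|n|≥κ} |f̂(n)|² (|n|+1)^{2r} → 0 as κ → ∞. -/
open Real Complex

/-!
Translation by `y` multiplies the `n`-th coefficient by `e^{iny}`, and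
`|e^{iny} - 1|² = 2 - 2 cos(ny)`, so `‖f(· + y) - f‖²` is the translation energy
`Σ (2 - 2 cos(ny)) g(n)` of the weighted coefficients `g(n) = |f̂(n)|² (|n| + 1)^{2r}`.
Frequencies `|n| < K` contribute at most `(Ky)² ‖f‖²` and the others at most four times the tail
beyond `K`: tightness gives equicontinuity. Conversely, the mean of `2 - 2 cos(ny)` over
`y ∈ [0, d]` is at least `1` as soon as `|n| ≥ 2/d`, so averaging the energy over `[0, d]` bounds
the tail beyond `2/d`.
-/

lemma norm_exp_I_mul_ofReal_sub_one_sq (x : ℝ) :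
    ‖Complex.exp (Complex.I * x) - 1‖ ^ 2 = 2 - 2 * Real.cos x := by
  rw [Complex.norm_exp_I_mul_ofReal_sub_one, Real.norm_eq_abs, sq_abs, mul_pow,
    Real.sin_sq_eq_half_sub, mul_div_cancel₀ x two_ne_zero]
  ring

lemma two_sub_two_cos_nonneg (x : ℝ) : 0 ≤ 2 - 2 * Real.cos x := by
  linarith [Real.cos_le_one x]

lemma two_sub_two_cos_le_four (x : ℝ) : 2 - 2 * Real.cos x ≤ 4 := by
  linarith [Real.neg_one_le_cos x]

lemma two_sub_two_cos_le_sq (x : ℝ) : 2 - 2 * Real.cos x ≤ x ^ 2 := by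
  linarith [Real.one_sub_sq_div_two_le_cos (x := x)]

lemma integral_two_sub_two_cos_mul {c : ℝ} (hc : c ≠ 0) (d : ℝ) :
    ∫ y in (0 : ℝ)..d, (2 - 2 * Real.cos (c * y)) = 2 * d - 2 * Real.sin (c * d) / c := by
  rw [intervalIntegral.integral_sub intervalIntegrable_const
      (by apply Continuous.intervalIntegrable; fun_prop),
    intervalIntegral.integral_const_mul,
    intervalIntegral.integral_comp_mul_left (fun x => Real.cos x) hc, integral_cos]
  simp only [mul_zero, Real.sin_zero, intervalIntegral.integral_const, smul_eq_mul]
  field_simp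
  ring

lemma le_integral_two_sub_two_cos_mul {c d : ℝ} (hd : 0 < d) (hc : 2 / d ≤ |c|) :
    d ≤ ∫ y in (0 : ℝ)..d, (2 - 2 * Real.cos (c * y)) := by
  have hc0 : 0 < |c| := (by positivity : 0 < 2 / d).trans_le hc
  rw [integral_two_sub_two_cos_mul (abs_pos.1 hc0)]
  have hsin : 2 * Real.sin (c * d) / c ≤ 2 / |c| := calc
    2 * Real.sin (c * d) / c ≤ |2 * Real.sin (c * d) / c| := le_abs_self _
    _ = 2 * |Real.sin (c * d)| / |c| := by rw [abs_div, abs_mul, abs_two]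
    _ ≤ 2 * 1 / |c| := by gcongr; exact Real.abs_sin_le_one _
    _ = 2 / |c| := by ring
  have : 2 / |c| ≤ d := (div_le_iff₀ hc0).2 (by rwa [div_le_iff₀ hd, mul_comm] at hc)
  linarith

noncomputable def translationEnergy (g : ℤ → ℝ) (y : ℝ) : ℝ :=
  ∑' n : ℤ, (2 - 2 * Real.cos (n * y)) * g n

noncomputable def tailMass (g : ℤ → ℝ) (K : ℝ) : ℝ :=
  ∑' n : ℤ, if K ≤ |(n : ℝ)| then g n else 0

lemma tsum_norm_exp_sub_one_mul_sq (f : ℤ → ℂ) (w : ℤ → ℝ) (y : ℝ) :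
    ∑' n : ℤ, ‖(Complex.exp (Complex.I * n * y) - 1) * f n‖ ^ 2 * w n
      = translationEnergy (fun n => ‖f n‖ ^ 2 * w n) y := by
  refine tsum_congr fun n => ?_
  rw [norm_mul, mul_pow,
    show Complex.I * n * y = Complex.I * ((n * y : ℝ) : ℂ) by push_cast; ring,
    norm_exp_I_mul_ofReal_sub_one_sq]
  ring

lemma summable_two_sub_two_cos_mul {g : ℤ → ℝ} (hg0 : ∀ n, 0 ≤ g n) (hg : Summable g)
    (y : ℝ) : Summable fun n : ℤ => (2 - 2 * Real.cos (n * y)) * g n :=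
  .of_nonneg_of_le (fun n => mul_nonneg (two_sub_two_cos_nonneg _) (hg0 n))
    (fun n => mul_le_mul_of_nonneg_right (two_sub_two_cos_le_four _) (hg0 n)) (hg.mul_left 4)

lemma summable_tailMass_summand {g : ℤ → ℝ} (hg0 : ∀ n, 0 ≤ g n) (hg : Summable g) (K : ℝ) :
    Summable fun n : ℤ => if K ≤ |(n : ℝ)| then g n else 0 :=
  .of_nonneg_of_le (fun n => by split_ifs <;> simp [hg0 n])
    (fun n => by split_ifs <;> simp [hg0 n]) hg

lemma translationEnergy_le {g : ℤ → ℝ} (hg0 : ∀ n, 0 ≤ g n) (hg : Summable g) (K y : ℝ) :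
    translationEnergy g y ≤ (K * y) ^ 2 * ∑' n, g n + 4 * tailMass g K := by
  have hterm (n : ℤ) : (2 - 2 * Real.cos (n * y)) * g n
      ≤ (K * y) ^ 2 * g n + 4 * if K ≤ |(n : ℝ)| then g n else 0 := by
    split_ifs with hn
    · nlinarith [two_sub_two_cos_le_four (n * y), hg0 n, sq_nonneg (K * y)]
    · have hny : (n * y) ^ 2 ≤ (K * y) ^ 2 := by
        have hnK := not_le.1 hn
        rw [mul_pow, mul_pow]
        exact mul_le_mul_of_nonneg_right (sq_le_sq' (by linarith [neg_abs_le (n : ℝ)])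
          (by linarith [le_abs_self (n : ℝ)])) (sq_nonneg y)
      nlinarith [two_sub_two_cos_le_sq (n * y), hg0 n]
  rw [translationEnergy, tailMass, ← tsum_mul_left, ← tsum_mul_left,
    ← (hg.mul_left _).tsum_add ((summable_tailMass_summand hg0 hg K).mul_left 4)]
  exact (summable_two_sub_two_cos_mul hg0 hg y).tsum_le_tsum hterm
    ((hg.mul_left _).add ((summable_tailMass_summand hg0 hg K).mul_left 4))

lemma tailMass_le_of_translationEnergy_le {g : ℤ → ℝ} (hg0 : ∀ n, 0 ≤ g n) (hg : Summable g)
    {d ε : ℝ} (hd : 0 < d) (h : ∀ y ∈ Set.Icc 0 d, translationEnergy g y ≤ ε) :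
    tailMass g (2 / d) ≤ ε := by
  refine (summable_tailMass_summand hg0 hg _).tsum_le_of_sum_le fun s =>
    le_of_mul_le_mul_right ?_ hd
  have hcont (n : ℤ) : Continuous fun y : ℝ => (2 - 2 * Real.cos (n * y)) * g n := by fun_prop
  calc (∑ n ∈ s, if 2 / d ≤ |(n : ℝ)| then g n else 0) * d
      = ∑ n ∈ s, (if 2 / d ≤ |(n : ℝ)| then g n else 0) * d := Finset.sum_mul ..
    _ ≤ ∑ n ∈ s, ∫ y in (0 : ℝ)..d, (2 - 2 * Real.cos (n * y)) * g n := by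
      refine Finset.sum_le_sum fun n _ => ?_
      rw [intervalIntegral.integral_mul_const]
      split_ifs with hn
      · rw [mul_comm]
        exact mul_le_mul_of_nonneg_right (le_integral_two_sub_two_cos_mul hd hn) (hg0 n)
      · rw [zero_mul]
        exact mul_nonneg (intervalIntegral.integral_nonneg hd.le
          fun y _ => two_sub_two_cos_nonneg _) (hg0 n)
    _ = ∫ y in (0 : ℝ)..d, ∑ n ∈ s, (2 - 2 * Real.cos (n * y)) * g n :=
      (intervalIntegral.integral_finsetSum fun n _ => (hcont n).intervalIntegrable _ _).symm
    _ ≤ ∫ _ in (0 : ℝ)..d, ε := by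
      refine intervalIntegral.integral_mono_on hd.le
        ((continuous_finsetSum s fun n _ => hcont n).intervalIntegrable _ _)
        intervalIntegrable_const fun y hy => ?_
      exact ((summable_two_sub_two_cos_mul hg0 hg y).sum_le_tsum s
        fun n _ => mul_nonneg (two_sub_two_cos_nonneg _) (hg0 n)).trans (h y hy)
    _ = ε * d := by simp [mul_comm]

lemma exists_pos_forall_abs_lt_mul_sq_le (C : ℝ) {η : ℝ} (hη : 0 < η) :
    ∃ δ > 0, ∀ y : ℝ, |y| < δ → C * y ^ 2 ≤ η := by
  have hlim : Filter.Tendsto (fun y : ℝ => C * y ^ 2) (nhds 0) (nhds 0) :=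
    (by fun_prop : Continuous fun y : ℝ => C * y ^ 2).tendsto' 0 0 (by simp)
  obtain ⟨δ, hδ, hsmall⟩ := Metric.eventually_nhds_iff.1 (hlim.eventually (ge_mem_nhds hη))
  exact ⟨δ, hδ, fun y hy => hsmall (by rwa [Real.dist_0_eq_abs])⟩

/-- A bounded subset `𝓕` of `H^r(𝕋)` (represented by Fourier coefficient sequences)
is equicontinuous iff it is tight in the Fourier variable.  Translation by `y`
multiplies the `n`-th Fourier coefficient by `e^{iny}`. -/
theorem equicontinuous_iff_tight (r : ℝ) (F : Set (ℤ → ℂ)) (B : ℝ)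
    (hbdd : ∀ f ∈ F, Summable (fun n : ℤ => ‖f n‖ ^ 2 * (|(n : ℝ)| + 1) ^ (2 * r))
      ∧ (∑' n : ℤ, ‖f n‖ ^ 2 * (|(n : ℝ)| + 1) ^ (2 * r)) ≤ B) :
    (∀ ε > (0 : ℝ), ∃ δ > (0 : ℝ), ∀ f ∈ F, ∀ y : ℝ, |y| < δ →
        Real.sqrt (∑' n : ℤ,
          ‖(Complex.exp (Complex.I * n * y) - 1) * f n‖ ^ 2
            * (|(n : ℝ)| + 1) ^ (2 * r)) ≤ ε)
    ↔ (∀ ε > (0 : ℝ), ∃ K : ℝ, ∀ f ∈ F,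
        (∑' n : ℤ, (if K ≤ |(n : ℝ)| then
            ‖f n‖ ^ 2 * (|(n : ℝ)| + 1) ^ (2 * r) else 0)) ≤ ε) := by
  have hg0 (f : ℤ → ℂ) (n : ℤ) : 0 ≤ ‖f n‖ ^ 2 * (|(n : ℝ)| + 1) ^ (2 * r) := by positivity
  simp only [tsum_norm_exp_sub_one_mul_sq]
  constructor
  · intro h ε hε
    obtain ⟨δ, hδ, hF⟩ := h (√ε) (Real.sqrt_pos.2 hε)
    refine ⟨2 / (δ / 2), fun f hf => tailMass_le_of_translationEnergy_le (hg0 f) (hbdd f hf).1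
      (half_pos hδ) fun y hy => ?_⟩
    have hyδ : |y| < δ := by rw [abs_of_nonneg hy.1]; linarith [hy.2]
    exact (Real.sqrt_le_sqrt_iff hε.le).1 (hF f hf y hyδ)
  · intro h ε hε
    obtain ⟨K, hK⟩ := h (ε ^ 2 / 8) (by positivity)
    obtain ⟨δ, hδ, hsmall⟩ :=
      exists_pos_forall_abs_lt_mul_sq_le (K ^ 2 * B) (by positivity : 0 < ε ^ 2 / 2)
    refine ⟨δ, hδ, fun f hf y hy => Real.sqrt_le_iff.2 ⟨hε.le, ?_⟩⟩
    calc translationEnergy _ y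
        ≤ (K * y) ^ 2 * ∑' n, ‖f n‖ ^ 2 * (|(n : ℝ)| + 1) ^ (2 * r) + 4 * tailMass _ K :=
          translationEnergy_le (hg0 f) (hbdd f hf).1 K y
      _ ≤ (K * y) ^ 2 * B + 4 * (ε ^ 2 / 8) := by gcongr; exacts [(hbdd f hf).2, hK f hf]
      _ ≤ ε ^ 2 := by nlinarith [hsmall y hy]
end

section
/- For every δ > 0 and every integer n ≠ 0, one has 0 < n²(coth(δn) − sgn(n))·sgn(n) ≤ 2n² e^{−2δ|n|}/(1 − e^{−2δ|n|}), and sup_{n≠0} n² |coth(δn) − sgn(n)| → 0 as δ → ∞. -/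
open Real

/-- The hyperbolic cotangent. -/
noncomputable def Real.coth (x : ℝ) : ℝ := Real.cosh x / Real.sinh x

lemma coth_neg' (x : ℝ) : Real.coth (-x) = - Real.coth x := by
  simp [Real.coth, neg_div, div_neg]

lemma coth_sub_one_eq {x : ℝ} (hx : 0 < x) :
    Real.coth x - 1 = 2 * Real.exp (-2*x) / (1 - Real.exp (-2*x)) := by
  have hs : 0 < Real.sinh x := Real.sinh_pos_iff.2 hx
  have h3 : 0 < 1 - Real.exp (-2*x) := by
    have : Real.exp (-2*x) < 1 := Real.exp_lt_one_iff.2 (by linarith)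
    linarith
  have hsne := hs.ne'
  have h3ne := h3.ne'
  have he2 : Real.exp (-2*x) = Real.exp (-x) * Real.exp (-x) := by
    rw [← Real.exp_add]; ring_nf
  have he1 : Real.exp (-x) * Real.exp x = 1 := by
    rw [← Real.exp_add]; simp
  have hstep : Real.coth x - 1 = Real.exp (-x) / Real.sinh x := by
    rw [Real.coth, div_sub_one hsne, Real.cosh_sub_sinh]
  rw [hstep, Real.sinh_eq]
  rw [div_eq_div_iff (by rw [Real.sinh_eq] at hs; linarith) h3ne]
  linear_combination (-(Real.exp x)) * he2 - Real.exp (-x) * he1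

lemma coth_sub_one_pos {x : ℝ} (hx : 0 < x) : 0 < Real.coth x - 1 := by
  rw [coth_sub_one_eq hx]
  have h1 : Real.exp (-2*x) < 1 := Real.exp_lt_one_iff.2 (by linarith)
  have h2 := Real.exp_pos (-2*x)
  apply div_pos (by linarith) (by linarith)

/-- Infinite-depth limit of the ILW dispersion symbol: for `δ > 0` and `n ≠ 0`,
`0 < n²(coth(δn) - sgn n)·sgn n ≤ 2n² e^{-2δ|n|}/(1 - e^{-2δ|n|})`, and
`sup_{n≠0} n²|coth(δn) - sgn n| → 0` as `δ → ∞`. -/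
theorem ilw_symbol_infinite_depth :
    (∀ δ : ℝ, 0 < δ → ∀ n : ℤ, n ≠ 0 →
      0 < (n : ℝ) ^ 2 * (Real.coth (δ * n) - (Int.sign n : ℝ)) * (Int.sign n : ℝ) ∧
      (n : ℝ) ^ 2 * (Real.coth (δ * n) - (Int.sign n : ℝ)) * (Int.sign n : ℝ)
        ≤ 2 * (n : ℝ) ^ 2 * Real.exp (-2 * δ * |(n : ℝ)|)
            / (1 - Real.exp (-2 * δ * |(n : ℝ)|))) ∧
    (∀ ε > (0 : ℝ), ∃ Δ : ℝ, ∀ δ : ℝ, Δ ≤ δ → ∀ n : ℤ, n ≠ 0 →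
      (n : ℝ) ^ 2 * |Real.coth (δ * n) - (Int.sign n : ℝ)| ≤ ε) := by
  have key : ∀ δ : ℝ, 0 < δ → ∀ n : ℤ, n ≠ 0 →
      (Real.coth (δ * n) - (Int.sign n : ℝ)) * (Int.sign n : ℝ)
        = Real.coth (δ * |(n : ℝ)|) - 1 := by
    intro δ hδ n hn
    rcases lt_or_gt_of_ne hn with h | h
    · have hs : (Int.sign n : ℝ) = -1 := by rw [Int.sign_eq_neg_one_iff_neg.2 h]; norm_num
      have habs : |(n : ℝ)| = -(n : ℝ) := abs_of_neg (by exact_mod_cast h)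
      rw [hs, habs, show δ * -(n:ℝ) = -(δ * n) from by ring, coth_neg']
      ring
    · have hs : (Int.sign n : ℝ) = 1 := by rw [Int.sign_eq_one_iff_pos.2 h]; norm_num
      have habs : |(n : ℝ)| = (n : ℝ) := abs_of_pos (by exact_mod_cast h)
      rw [hs, habs]; ring
  have habspos : ∀ n : ℤ, n ≠ 0 → (1:ℝ) ≤ |(n : ℝ)| := by
    intro n hn
    have h1 : (1:ℤ) ≤ |n| := Int.one_le_abs (by simpa using hn)
    calc (1:ℝ) ≤ ((|n| : ℤ) : ℝ) := by exact_mod_cast h1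
    _ = |(n : ℝ)| := by push_cast; ring
  constructor
  · intro δ hδ n hn
    have hpos : 0 < δ * |(n : ℝ)| := by nlinarith [habspos n hn]
    have hn2 : (0:ℝ) < (n : ℝ) ^ 2 := by
      have : (n:ℝ) ≠ 0 := by exact_mod_cast hn
      positivity
    rw [mul_assoc, key δ hδ n hn]
    refine ⟨mul_pos hn2 (coth_sub_one_pos hpos), ?_⟩
    rw [coth_sub_one_eq hpos,
      show -2*δ*|(n:ℝ)| = -2*(δ*|(n:ℝ)|) from by ring]
    exact le_of_eq (by ring)
  · intro ε hε
    refine ⟨max 1 ((2 - Real.log (ε/4))/2), ?_⟩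
    intro δ hδ n hn
    have hδ1 : 1 ≤ δ := le_trans (le_max_left _ _) hδ
    have hδ0 : 0 < δ := by linarith
    have habs := habspos n hn
    have hpos : 0 < δ * |(n : ℝ)| := by nlinarith
    have hid := key δ hδ0 n hn
    have hcp := coth_sub_one_pos hpos
    have hsgn : ((Int.sign n : ℝ))^2 = 1 := by
      rcases lt_or_gt_of_ne hn with h | h
      · rw [Int.sign_eq_neg_one_iff_neg.2 h]; norm_num
      · rw [Int.sign_eq_one_iff_pos.2 h]; norm_num
    have hs1 : (Int.sign n : ℝ) = 1 ∨ (Int.sign n : ℝ) = -1 := by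
      rcases lt_or_gt_of_ne hn with h | h
      · right; rw [Int.sign_eq_neg_one_iff_neg.2 h]; norm_num
      · left; rw [Int.sign_eq_one_iff_pos.2 h]; norm_num
    have habsid : |Real.coth (δ * n) - (Int.sign n : ℝ)|
        = Real.coth (δ * |(n : ℝ)|) - 1 := by
      rcases hs1 with h | h <;> rw [h] at hid ⊢
      · rw [mul_one] at hid; rw [hid, abs_of_pos hcp]
      · have heq : Real.coth (δ * n) - (-1 : ℝ)
            = -(Real.coth (δ * |(n : ℝ)|) - 1) := by linarith [hid]
        rw [heq, abs_neg, abs_of_pos hcp]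
    rw [habsid, coth_sub_one_eq hpos]
    set t := δ * |(n:ℝ)| with ht
    have hden : (1:ℝ)/2 ≤ 1 - Real.exp (-2*t) := by
      have h1 : Real.exp (-2*t) ≤ Real.exp (-2) := Real.exp_le_exp.2 (by nlinarith)
      have h2 : Real.exp (-2) ≤ 1/2 := by
        have he : (2:ℝ) ≤ Real.exp 2 := by nlinarith [Real.add_one_le_exp (2:ℝ)]
        rw [Real.exp_neg]
        rw [inv_le_comm₀ (by positivity) (by norm_num)]
        simpa using he
      linarith
    have hnum : (n:ℝ)^2 * Real.exp (-2*t) ≤ Real.exp (2 - 2*δ) := by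
      have h2 : |(n:ℝ)| ≤ Real.exp |(n:ℝ)| := by
        nlinarith [Real.add_one_le_exp |(n:ℝ)|]
      have h1 : (n:ℝ)^2 ≤ Real.exp (2*|(n:ℝ)|) := by
        calc (n:ℝ)^2 = |(n:ℝ)|^2 := (sq_abs _).symm
        _ ≤ (Real.exp |(n:ℝ)|)^2 := pow_le_pow_left₀ (abs_nonneg _) h2 2
        _ = Real.exp (2*|(n:ℝ)|) := by
            rw [sq, ← Real.exp_add]; ring_nf
      calc (n:ℝ)^2 * Real.exp (-2*t)
          ≤ Real.exp (2*|(n:ℝ)|) * Real.exp (-2*t) :=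
            mul_le_mul_of_nonneg_right h1 (Real.exp_pos _).le
        _ = Real.exp (2*|(n:ℝ)| + -2*t) := (Real.exp_add _ _).symm
        _ ≤ Real.exp (2 - 2*δ) := Real.exp_le_exp.2 (by rw [ht]; nlinarith)
    have hεb : Real.exp (2 - 2*δ) ≤ ε/4 := by
      have hδ2 : (2 - Real.log (ε/4))/2 ≤ δ := le_trans (le_max_right _ _) hδ
      calc Real.exp (2 - 2*δ) ≤ Real.exp (Real.log (ε/4)) :=
            Real.exp_le_exp.2 (by linarith)
        _ = ε/4 := Real.exp_log (by positivity)
    have hdiv : 2 * Real.exp (-2*t) / (1 - Real.exp (-2*t)) ≤ 4 * Real.exp (-2*t) := by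
      rw [div_le_iff₀ (by linarith : (0:ℝ) < 1 - Real.exp (-2*t))]
      nlinarith [Real.exp_pos (-2*t), (Real.exp_pos (-2*t)).le]
    calc (n:ℝ)^2 * (2 * Real.exp (-2*t) / (1 - Real.exp (-2*t)))
        ≤ (n:ℝ)^2 * (4 * Real.exp (-2*t)) :=
          mul_le_mul_of_nonneg_left hdiv (sq_nonneg _)
      _ = 4 * ((n:ℝ)^2 * Real.exp (-2*t)) := by ring
      _ ≤ 4 * (ε/4) := by linarith
      _ = ε := by ring
end
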